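/- arXiv:1912.06674 — 9 statements merged into one kernel-verified Lean document; each statement's English description precedes it below -/
import Mathlib

section
/- Let (V,+) be a nontrivial abelian group containing an element v with 2v ≠ 0, and let G be a group of automorphisms of V acting fixed-point-freely. Then G contains at most one element of order 2. -/
/-! An involution `x` of `V` without nonzero fixed points is `-1`, because `x v + v` is fixed
by `x`. Fixed-point-freeness of `G` rules out nonzero fixed points of its nonzero elements, so
two involutions of `G` agree on a nonzero vector and hence coincide. -/

namespace AddAut

variable {A : Type*}

theorem apply_apply_of_two_nsmul_eq_zero [Add A] {x : AddAut A} (hx : 2 • x = 0) (a : A) :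
    x (x a) = a := by
  simpa [two_nsmul] using DFunLike.congr_fun hx a

theorem apply_eq_neg_of_two_nsmul_eq_zero [AddCommGroup A] {x : AddAut A} (hx : 2 • x = 0)
    (hfix : ∀ a, x a = a → a = 0) (a : A) : x a = -a := by
  refine eq_neg_of_add_eq_zero_left (hfix _ ?_)
  rw [map_add, apply_apply_of_two_nsmul_eq_zero hx, add_comm]

theorem eq_zero_of_apply_eq_self_of_fixedPointFree [AddGroup A] {G : AddSubgroup (AddAut A)}
    (hfpf : ∀ g ∈ G, ∀ h ∈ G, ∀ a : A, a ≠ 0 → g a = h a → g = h) {g : AddAut A} (hg : g ∈ G)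
    (hg0 : g ≠ 0) {a : A} (ha : g a = a) : a = 0 :=
  by_contra fun h ↦ hg0 (hfpf g hg 0 G.zero_mem a h ha)

end AddAut

/-- If `V` is an abelian group containing an element `v` with `v + v ≠ 0` and `G`
is a group of automorphisms of `V` acting fixed-point-freely, then `G` contains
at most one element of order 2. -/
theorem stmt3 {V : Type*} [AddCommGroup V] (hv : ∃ v : V, v + v ≠ 0)
    (G : AddSubgroup (AddAut V))
    (hfpf : ∀ g ∈ G, ∀ h ∈ G, ∀ v : V, v ≠ 0 → g v = h v → g = h) :
    ∀ x ∈ G, ∀ y ∈ G, x ≠ 0 → 2 • x = 0 → y ≠ 0 → 2 • y = 0 → x = y := by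
  intro x hx y hy hx0 hx2 hy0 hy2
  obtain ⟨v, hv⟩ := hv
  have hv0 : v ≠ 0 := by rintro rfl; simp at hv
  have apply_eq_neg : ∀ g ∈ G, g ≠ 0 → 2 • g = 0 → g v = -v := fun g hg hg0 hg2 ↦
    AddAut.apply_eq_neg_of_two_nsmul_eq_zero hg2
      (fun _ ↦ AddAut.eq_zero_of_apply_eq_self_of_fixedPointFree hfpf hg hg0) v
  exact hfpf x hx y hy v hv0 ((apply_eq_neg x hx hx0 hx2).trans (apply_eq_neg y hy hy0 hy2).symm)
end

section
/- Key Lemma: Let (V,A) be a near-vector space and S = {v_i : i ∈ I} a linearly independent subset of Q(V). Suppose v = Σ_i θ_i v_i and v' = Σ_i θ'_i v_i (finitely supported sums, θ_i, θ'_i ∈ A) both lie in Q(V), and suppose there exist i₀ ≠ j₀ in I with θ_{i₀}, θ'_{j₀} nonzero and +_{θ_{i₀} v_{i₀}} = +_{θ'_{j₀} v_{j₀}}. Then +_v = +_{v'} and moreover +_v = +_{θ_i v_i} for every i with θ_i ≠ 0. -/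
/-!
If `v = Σ σⱼ vⱼ ∈ Q(V)` and `γ = α +_v β`, `δⱼ = α +_{σⱼ vⱼ} β`, then
`Σ (δⱼ σⱼ vⱼ - γ σⱼ vⱼ) = (α v + β v) - γ v = 0`. Since each `vⱼ ∈ Q(V)`, every summand is of
the form `ηⱼ vⱼ` with `ηⱼ ∈ A`, so linear independence kills it; as `A*` acts fixed-point-freely
this forces `δᵢ = γ` whenever `σᵢ vᵢ ≠ 0`. Hence `+_v = +_{σᵢ vᵢ}` for every nonzero
coefficient `σᵢ`, and the hypothesis `+_{θ_{i₀} v_{i₀}} = +_{θ'_{j₀} v_{j₀}}` links `+_v` and `+_{v'}`.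
-/

/-- The quasi-kernel `Q(V)` of the pair `(V, A)`. -/
def Qset {V : Type*} [AddCommGroup V] (A : Set (V → V)) : Set V :=
  {x | ∀ α ∈ A, ∀ β ∈ A, ∃ γ ∈ A, α x + β x = γ x}

/-- `(V, A)` is a (non-trivial) near-vector space in the sense of André. -/
structure IsNVS {V : Type*} [AddCommGroup V] (A : Set (V → V)) : Prop where
  nontriv : ∃ x : V, x ≠ 0
  zero_mem : (0 : V → V) ∈ A
  id_mem : (id : V → V) ∈ A
  neg_mem : (fun x : V => -x) ∈ A
  endo : ∀ α ∈ A, ∀ x y : V, α (x + y) = α x + α y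
  bij : ∀ α ∈ A, α ≠ 0 → Function.Bijective α
  comp_mem : ∀ α ∈ A, ∀ β ∈ A, α ≠ 0 → β ≠ 0 → α ∘ β ∈ A
  inv_mem : ∀ α ∈ A, α ≠ 0 → ∃ β ∈ A, β ≠ 0 ∧ α ∘ β = id ∧ β ∘ α = id
  fpf : ∀ α ∈ A, ∀ β ∈ A, ∀ x : V, α x = β x → α = β ∨ x = 0
  gen : AddSubgroup.closure (Qset A) = (⊤ : AddSubgroup V)

open Classical in
/-- The addition `+_v` induced on `A` by a (nonzero quasi-kernel) element `v`:
`α +_v β` is the unique `γ` with `γ v = α v + β v`. -/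
noncomputable def nvAdd {V : Type*} [AddCommGroup V] (A : Set (V → V)) (v : V)
    (α β : V → V) : V → V :=
  if h : ∃ γ ∈ A, γ v = α v + β v then h.choose else 0

section NearVectorSpace

variable {V : Type*} [AddCommGroup V] {A : Set (V → V)}

theorem nvAdd_spec {v : V} {α β : V → V} (hv : v ∈ Qset A) (hα : α ∈ A) (hβ : β ∈ A) :
    nvAdd A v α β ∈ A ∧ nvAdd A v α β v = α v + β v := by
  have hex : ∃ γ ∈ A, γ v = α v + β v := by
    obtain ⟨γ, hγ, hγv⟩ := hv α hα β hβ
    exact ⟨γ, hγ, hγv.symm⟩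
  rw [nvAdd, dif_pos hex]
  exact hex.choose_spec

namespace IsNVS

theorem map_zero (h : IsNVS A) {α : V → V} (hα : α ∈ A) : α 0 = 0 :=
  (AddMonoidHom.mk' α (h.endo α hα)).map_zero

theorem map_sum (h : IsNVS A) {α : V → V} (hα : α ∈ A) {ι : Type*} (s : Finset ι)
    (f : ι → V) : α (∑ i ∈ s, f i) = ∑ i ∈ s, α (f i) :=
  _root_.map_sum (AddMonoidHom.mk' α (h.endo α hα)) f s

theorem comp_mem' (h : IsNVS A) {α β : V → V} (hα : α ∈ A) (hβ : β ∈ A) : α ∘ β ∈ A := by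
  by_cases hα0 : α = 0
  · subst hα0
    exact h.zero_mem
  by_cases hβ0 : β = 0
  · have : α ∘ β = 0 := by
      subst hβ0
      funext x
      exact h.map_zero hα
    exact this ▸ h.zero_mem
  exact h.comp_mem α hα β hβ hα0 hβ0

theorem eq_of_apply_eq (h : IsNVS A) {γ γ' : V → V} {v : V} (hγ : γ ∈ A) (hγ' : γ' ∈ A)
    (hv : v ≠ 0) (hγv : γ v = γ' v) : γ = γ' :=
  (h.fpf γ hγ γ' hγ' v hγv).resolve_right hv

theorem apply_ne_zero (h : IsNVS A) {α : V → V} {x : V} (hα : α ∈ A) (hα0 : α ≠ 0)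
    (hx : x ≠ 0) : α x ≠ 0 :=
  fun hαx => hα0 (h.eq_of_apply_eq hα h.zero_mem hx hαx)

/-- Conjugate the defining relation of `x` by `θ⁻¹`. -/
theorem apply_mem_Qset (h : IsNVS A) {x : V} {θ : V → V} (hx : x ∈ Qset A) (hθ : θ ∈ A) :
    θ x ∈ Qset A := by
  intro α hα β hβ
  by_cases hθ0 : θ = 0
  · subst hθ0
    exact ⟨0, h.zero_mem, by simp [h.map_zero hα, h.map_zero hβ]⟩
  obtain ⟨γ, hγA, hγ⟩ := hx (α ∘ θ) (h.comp_mem' hα hθ) (β ∘ θ) (h.comp_mem' hβ hθ)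
  obtain ⟨θinv, hθinvA, -, -, hθinv⟩ := h.inv_mem θ hθ hθ0
  refine ⟨γ ∘ θinv, h.comp_mem' hγA hθinvA, ?_⟩
  change α (θ x) + β (θ x) = γ (θinv (θ x))
  rw [show θinv (θ x) = x from congrFun hθinv x]
  exact hγ

theorem exists_apply_eq_sub (h : IsNVS A) {x : V} {α β : V → V} (hx : x ∈ Qset A)
    (hα : α ∈ A) (hβ : β ∈ A) : ∃ η ∈ A, η x = α x - β x := by
  obtain ⟨η, hηA, hη⟩ := hx α hα _ (h.comp_mem' h.neg_mem hβ)
  exact ⟨η, hηA, hη.symm.trans (sub_eq_add_neg _ _).symm⟩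

end IsNVS

def NVLinearIndependent {I : Type*} (A : Set (V → V)) (vf : I → V) : Prop :=
  ∀ (s : Finset I) (θ : I → V → V), (∀ i ∈ s, θ i ∈ A) →
    ∑ i ∈ s, θ i (vf i) = 0 → ∀ i ∈ s, θ i = 0

namespace NVLinearIndependent

variable {I : Type*} {vf : I → V}

theorem ne_zero (h : IsNVS A) (hind : NVLinearIndependent A vf) (i : I) : vf i ≠ 0 := by
  intro hvi
  obtain ⟨x, hx⟩ := h.nontriv
  have hid : (id : V → V) = 0 :=
    hind {i} (fun _ => id) (fun _ _ => h.id_mem) (by simp [hvi]) i (Finset.mem_singleton_self i)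
  exact hx (congrFun hid x)

theorem eq_zero_of_sum_eq_zero (h : IsNVS A) (hind : NVLinearIndependent A vf)
    {u : Finset I} {w : I → V} (hw : ∀ j ∈ u, ∃ η ∈ A, η (vf j) = w j)
    (hsum : ∑ j ∈ u, w j = 0) : ∀ j ∈ u, w j = 0 := by
  have hw' : ∀ j, ∃ η ∈ A, j ∈ u → η (vf j) = w j := by
    intro j
    by_cases hj : j ∈ u
    · obtain ⟨η, hηA, hη⟩ := hw j hj
      exact ⟨η, hηA, fun _ => hη⟩
    · exact ⟨0, h.zero_mem, fun hj' => absurd hj' hj⟩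
  choose η hηA hη using hw'
  have hη0 : ∀ j ∈ u, η j = 0 := hind u η (fun j _ => hηA j) <| by
    rw [← hsum]
    exact Finset.sum_congr rfl fun j hj => hη j hj
  intro j hj
  rw [← hη j hj, hη0 j hj, Pi.zero_apply]

end NVLinearIndependent

theorem IsNVS.nvAdd_sum_eq_nvAdd_term (h : IsNVS A) {I : Type*} {vf : I → V}
    (hvQ : ∀ i, vf i ∈ Qset A) (hind : NVLinearIndependent A vf) {u : Finset I}
    {σ : I → V → V} (hσA : ∀ i ∈ u, σ i ∈ A) (hQ : ∑ j ∈ u, σ j (vf j) ∈ Qset A)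
    {i : I} (hi : i ∈ u) (hσi : σ i ≠ 0) {α β : V → V} (hα : α ∈ A) (hβ : β ∈ A) :
    nvAdd A (∑ j ∈ u, σ j (vf j)) α β = nvAdd A (σ i (vf i)) α β := by
  set v := ∑ j ∈ u, σ j (vf j) with hv
  obtain ⟨hγA, hγ⟩ := nvAdd_spec hQ hα hβ
  set γ := nvAdd A v α β
  have hδ : ∀ j ∈ u, nvAdd A (σ j (vf j)) α β ∈ A ∧
      nvAdd A (σ j (vf j)) α β (σ j (vf j)) = α (σ j (vf j)) + β (σ j (vf j)) :=
    fun j hj => nvAdd_spec (h.apply_mem_Qset (hvQ j) (hσA j hj)) hα hβ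
  set δ : I → V → V := fun j => nvAdd A (σ j (vf j)) α β
  have hw : ∀ j ∈ u, ∃ η ∈ A, η (vf j) = δ j (σ j (vf j)) - γ (σ j (vf j)) := fun j hj =>
    h.exists_apply_eq_sub (hvQ j) (h.comp_mem' (hδ j hj).1 (hσA j hj))
      (h.comp_mem' hγA (hσA j hj))
  have hsum : ∑ j ∈ u, (δ j (σ j (vf j)) - γ (σ j (vf j))) = 0 := by
    have hδsum : ∑ j ∈ u, δ j (σ j (vf j)) = α v + β v := by
      rw [hv, h.map_sum hα, h.map_sum hβ, ← Finset.sum_add_distrib]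
      exact Finset.sum_congr rfl fun j hj => (hδ j hj).2
    rw [Finset.sum_sub_distrib, hδsum, ← h.map_sum hγA, ← hv, hγ, sub_self]
  have hδi : δ i (σ i (vf i)) = γ (σ i (vf i)) :=
    sub_eq_zero.mp (hind.eq_zero_of_sum_eq_zero h hw hsum i hi)
  exact (h.eq_of_apply_eq (hδ i hi).1 hγA (h.apply_ne_zero (hσA i hi) hσi (hind.ne_zero h i))
    hδi).symm

end NearVectorSpace

theorem stmt7_general {V : Type*} [AddCommGroup V] (A : Set (V → V)) (h : IsNVS A)
    {I : Type*} (vf : I → V) (hvQ : ∀ i, vf i ∈ Qset A)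
    (hindep : ∀ (s : Finset I) (θ : I → V → V), (∀ i ∈ s, θ i ∈ A) →
      ∑ i ∈ s, θ i (vf i) = 0 → ∀ i ∈ s, θ i = 0)
    (s t : Finset I) (θ θ' : I → V → V)
    (hθA : ∀ i ∈ s, θ i ∈ A) (hθ'A : ∀ i ∈ t, θ' i ∈ A)
    (hvQs : (∑ i ∈ s, θ i (vf i)) ∈ Qset A)
    (hvQt : (∑ i ∈ t, θ' i (vf i)) ∈ Qset A)
    (i0 j0 : I) (hi0 : i0 ∈ s) (hj0 : j0 ∈ t)
    (hθi0 : θ i0 ≠ 0) (hθ'j0 : θ' j0 ≠ 0)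
    (heq : ∀ α ∈ A, ∀ β ∈ A,
      nvAdd A (θ i0 (vf i0)) α β = nvAdd A (θ' j0 (vf j0)) α β) :
    (∀ α ∈ A, ∀ β ∈ A,
        nvAdd A (∑ i ∈ s, θ i (vf i)) α β = nvAdd A (∑ i ∈ t, θ' i (vf i)) α β) ∧
    (∀ i ∈ s, θ i ≠ 0 → ∀ α ∈ A, ∀ β ∈ A,
        nvAdd A (∑ j ∈ s, θ j (vf j)) α β = nvAdd A (θ i (vf i)) α β) := by
  refine ⟨fun α hα β hβ => ?_, fun i hi hθi α hα β hβ =>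
    h.nvAdd_sum_eq_nvAdd_term hvQ hindep hθA hvQs hi hθi hα hβ⟩
  rw [h.nvAdd_sum_eq_nvAdd_term hvQ hindep hθA hvQs hi0 hθi0 hα hβ, heq α hα β hβ,
    h.nvAdd_sum_eq_nvAdd_term hvQ hindep hθ'A hvQt hj0 hθ'j0 hα hβ]

/-- Key Lemma: if `v = Σ θᵢ vᵢ` and `v' = Σ θ'ᵢ vᵢ` (finitely supported combinations
over a linearly independent subset of `Q(V)`) both lie in `Q(V)` and
`+_{θ_{i₀} v_{i₀}} = +_{θ'_{j₀} v_{j₀}}` for some `i₀ ≠ j₀` with nonzero coefficients,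
then `+_v = +_{v'}` and `+_v = +_{θᵢ vᵢ}` for every `i` with `θᵢ ≠ 0`. -/
theorem stmt7 {V : Type*} [AddCommGroup V] (A : Set (V → V)) (h : IsNVS A)
    {I : Type*} (vf : I → V) (hvQ : ∀ i, vf i ∈ Qset A)
    (hindep : ∀ (s : Finset I) (θ : I → V → V), (∀ i ∈ s, θ i ∈ A) →
      ∑ i ∈ s, θ i (vf i) = 0 → ∀ i ∈ s, θ i = 0)
    (s t : Finset I) (θ θ' : I → V → V)
    (hθA : ∀ i ∈ s, θ i ∈ A) (hθ'A : ∀ i ∈ t, θ' i ∈ A)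
    (hvQs : (∑ i ∈ s, θ i (vf i)) ∈ Qset A)
    (hvQt : (∑ i ∈ t, θ' i (vf i)) ∈ Qset A)
    (i0 j0 : I) (hi0 : i0 ∈ s) (hj0 : j0 ∈ t) (hne : i0 ≠ j0)
    (hθi0 : θ i0 ≠ 0) (hθ'j0 : θ' j0 ≠ 0)
    (heq : ∀ α ∈ A, ∀ β ∈ A,
      nvAdd A (θ i0 (vf i0)) α β = nvAdd A (θ' j0 (vf j0)) α β) :
    (∀ α ∈ A, ∀ β ∈ A,
        nvAdd A (∑ i ∈ s, θ i (vf i)) α β = nvAdd A (∑ i ∈ t, θ' i (vf i)) α β) ∧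
    (∀ i ∈ s, θ i ≠ 0 → ∀ α ∈ A, ∀ β ∈ A,
        nvAdd A (∑ j ∈ s, θ j (vf j)) α β = nvAdd A (θ i (vf i)) α β) :=
  stmt7_general A h vf hvQ hindep s t θ θ' hθA hθ'A hvQs hvQt i0 j0 hi0 hj0 hθi0 hθ'j0 heq
end

section
/- Let (V,A) be a near-vector space, S = {v_i : i ∈ I} a linearly independent subset of Q(V), and v = Σ_i θ_i v_i ∈ Q(V) a finitely supported linear combination. Then +_v = +_{θ_i v_i} for every i ∈ I with θ_i ≠ 0. -/
/-- If `v = Σ θᵢ vᵢ ∈ Q(V)` is a finitely supported linear combination over a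
linearly independent subset of `Q(V)`, then `+_v = +_{θᵢ vᵢ}` for every `i`
with `θᵢ ≠ 0`. -/
theorem stmt8 {V : Type*} [AddCommGroup V] (A : Set (V → V)) (h : IsNVS A)
    {I : Type*} (vf : I → V) (hvQ : ∀ i, vf i ∈ Qset A)
    (hindep : ∀ (s : Finset I) (θ : I → V → V), (∀ i ∈ s, θ i ∈ A) →
      ∑ i ∈ s, θ i (vf i) = 0 → ∀ i ∈ s, θ i = 0)
    (s : Finset I) (θ : I → V → V) (hθA : ∀ i ∈ s, θ i ∈ A)
    (hvQs : (∑ i ∈ s, θ i (vf i)) ∈ Qset A) :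
    ∀ i ∈ s, θ i ≠ 0 → ∀ α ∈ A, ∀ β ∈ A,
      nvAdd A (∑ j ∈ s, θ j (vf j)) α β = nvAdd A (θ i (vf i)) α β := by
  intro i hi hθi α hα β hβ
  have hzero : ∀ φ ∈ A, φ (0 : V) = 0 := fun φ hφ =>
    (AddMonoidHom.mk' φ (h.endo φ hφ)).map_zero
  have hsum : ∀ φ ∈ A,
      φ (∑ j ∈ s, θ j (vf j)) = ∑ j ∈ s, φ (θ j (vf j)) := fun φ hφ =>
    map_sum (AddMonoidHom.mk' φ (h.endo φ hφ)) _ s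
  have hnegne : (fun x : V => -x) ≠ 0 := by
    intro hne
    obtain ⟨x, hx⟩ := h.nontriv
    have := congrFun hne x
    simp only [Pi.zero_apply, neg_eq_zero] at this
    exact hx this
  -- scaled action
  have hscale : ∀ φ ∈ A, ∀ j ∈ s, ∃ ψ ∈ A, ψ (vf j) = φ (θ j (vf j)) := by
    intro φ hφ j hj
    by_cases hφ0 : φ = 0
    · exact ⟨0, h.zero_mem, by simp [hφ0]⟩
    by_cases hθ0 : θ j = 0
    · exact ⟨0, h.zero_mem, by simp [hθ0, hzero φ hφ]⟩
    · exact ⟨φ ∘ θ j, h.comp_mem φ hφ (θ j) (hθA j hj) hφ0 hθ0, rfl⟩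
  -- the witness γ used by `nvAdd` at v
  have hv : ∃ γ ∈ A, γ (∑ j ∈ s, θ j (vf j)) =
      α (∑ j ∈ s, θ j (vf j)) + β (∑ j ∈ s, θ j (vf j)) := by
    obtain ⟨γ0, hγ0A, hγ0⟩ := hvQs α hα β hβ
    exact ⟨γ0, hγ0A, hγ0.symm⟩
  set γ := hv.choose with hγdef
  obtain ⟨hγA, hγ⟩ := hv.choose_spec
  -- construct the coefficients η
  have key : ∀ j, ∃ η, η ∈ A ∧ (j ∈ s →
      η (vf j) = α (θ j (vf j)) + β (θ j (vf j)) - γ (θ j (vf j))) := by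
    intro j
    by_cases hj : j ∈ s
    · obtain ⟨α', hα'A, hα'⟩ := hscale α hα j hj
      obtain ⟨β', hβ'A, hβ'⟩ := hscale β hβ j hj
      obtain ⟨γ', hγ'A, hγ'⟩ := hscale γ hγA j hj
      have hneg : ∃ ν ∈ A, ν (vf j) = -(γ' (vf j)) := by
        by_cases hγ'0 : γ' = 0
        · exact ⟨0, h.zero_mem, by simp [hγ'0]⟩
        · exact ⟨(fun x => -x) ∘ γ', h.comp_mem _ h.neg_mem γ' hγ'A hnegne hγ'0, rfl⟩
      obtain ⟨ν, hνA, hν⟩ := hneg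
      obtain ⟨δ, hδA, hδ⟩ := hvQ j α' hα'A β' hβ'A
      obtain ⟨η, hηA, hη⟩ := hvQ j δ hδA ν hνA
      refine ⟨η, hηA, fun _ => ?_⟩
      rw [← hη, ← hδ, hα', hβ', hν, hγ']
      abel
    · exact ⟨0, h.zero_mem, fun hj' => absurd hj' hj⟩
  choose η hηA hηval using key
  have hsum0 : ∑ j ∈ s, η j (vf j) = 0 := by
    rw [Finset.sum_congr rfl (fun j hj => hηval j hj)]
    rw [Finset.sum_sub_distrib, Finset.sum_add_distrib,
      ← hsum α hα, ← hsum β hβ, ← hsum γ hγA, hγdef, hγ]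
    abel
  have hη0 : η i = 0 := hindep s η (fun j _ => hηA j) hsum0 i hi
  have keyi : γ (θ i (vf i)) = α (θ i (vf i)) + β (θ i (vf i)) := by
    have := hηval i hi
    rw [hη0] at this
    simp only [Pi.zero_apply] at this
    exact (sub_eq_zero.mp this.symm).symm
  -- θ i (vf i) ≠ 0
  have hvi : vf i ≠ 0 := by
    intro h0
    have hid : (id : V → V) = 0 := by
      refine hindep {i} (fun _ => id) (by simp [h.id_mem]) (by simp [h0]) i (by simp)
    obtain ⟨x, hx⟩ := h.nontriv
    have := congrFun hid x
    simp at this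
    exact hx this
  have hw0 : θ i (vf i) ≠ 0 := by
    intro h0
    apply hvi
    apply (h.bij (θ i) (hθA i hi) hθi).injective
    rw [h0, hzero (θ i) (hθA i hi)]
  have hw : ∃ γ' ∈ A, γ' (θ i (vf i)) = α (θ i (vf i)) + β (θ i (vf i)) :=
    ⟨γ, hγA, keyi⟩
  unfold nvAdd
  rw [dif_pos hv, dif_pos hw, ← hγdef]
  obtain ⟨hwA, hweq⟩ := hw.choose_spec
  rcases h.fpf γ hγA hw.choose hwA (θ i (vf i)) (by rw [keyi, hweq]) with heq | h0
  · exact heq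
  · exact absurd h0 hw0
end

section
/- Let (V,A) be a near-vector space such that for some nonzero v ∈ Q(V), V is a vector space over the near-field (A, +_v, ·) (i.e., both distributive laws hold: α(x+y) = αx + αy and (α +_v β)x = αx + βx for all x,y ∈ V). Then Q(V) = V. -/
/-- If for some nonzero `v ∈ Q(V)` the near-vector space `V` is a vector space over
the near-field `(A, +_v, ∘)` (i.e. the distributive law `(α +_v β)x = αx + βx`
holds for all `x ∈ V`), then `Q(V) = V`. -/
theorem stmt10 {V : Type*} [AddCommGroup V] (A : Set (V → V)) (h : IsNVS A)
    (v : V) (hvQ : v ∈ Qset A) (hv0 : v ≠ 0)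
    (hdist : ∀ α ∈ A, ∀ β ∈ A, ∀ x : V, nvAdd A v α β x = α x + β x) :
    Qset A = Set.univ := by
  ext x
  simp only [Set.mem_univ, iff_true]
  intro α hα β hβ
  obtain ⟨γ, hγA, hγ⟩ := hvQ α hα β hβ
  have hex : ∃ γ ∈ A, γ v = α v + β v := ⟨γ, hγA, hγ.symm⟩
  refine ⟨nvAdd A v α β, ?_, (hdist α hα β hβ x).symm⟩
  rw [nvAdd, dif_pos hex]
  exact hex.choose_spec.1
end

section
/- Let (V,A) be a near-vector space with Q(V) = V, and suppose (A, +_w, ·) is right distributive (a division ring) for every nonzero w ∈ V. Then +_v = +_w for all nonzero v, w ∈ V. -/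
private lemma cancel_aux {M : Type*} [AddCommGroup M] {a b c d e f : M}
    (h1 : a + b = c + d) (h2 : a + e = c + f) : b + f = d + e := by
  have key : (a + c) + (b + f) = (a + c) + (d + e) := by
    calc (a + c) + (b + f) = (a + b) + (c + f) := by abel
    _ = (c + d) + (a + e) := by rw [h1, h2]
    _ = (a + c) + (d + e) := by abel
  exact add_left_cancel key

/-- If `Q(V) = V` and `(A, +_w, ∘)` is right distributive (a division ring) for
every nonzero `w`, then `+_v = +_w` for all nonzero `v, w`. -/
theorem stmt11 {V : Type*} [AddCommGroup V] (A : Set (V → V)) (h : IsNVS A)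
    (hQ : Qset A = Set.univ)
    (hdr : ∀ w : V, w ≠ 0 → ∀ α ∈ A, ∀ β ∈ A, ∀ θ ∈ A,
      nvAdd A w α β ∘ θ = nvAdd A w (α ∘ θ) (β ∘ θ)) :
    ∀ v w : V, v ≠ 0 → w ≠ 0 → ∀ α ∈ A, ∀ β ∈ A,
      nvAdd A v α β = nvAdd A w α β := by
  have hzero : ∀ α ∈ A, α (0 : V) = 0 := by
    intro α hα
    have h0 := h.endo α hα 0 0
    rw [add_zero] at h0
    exact (left_eq_add.mp h0)
  have hex : ∀ (v : V), ∀ α ∈ A, ∀ β ∈ A, ∃ γ ∈ A, γ v = α v + β v := by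
    intro v α hα β hβ
    have hv' : v ∈ Qset A := by rw [hQ]; trivial
    obtain ⟨γ, hγA, hγ⟩ := hv' α hα β hβ
    exact ⟨γ, hγA, hγ.symm⟩
  have hspec : ∀ (v : V), ∀ α ∈ A, ∀ β ∈ A,
      nvAdd A v α β ∈ A ∧ nvAdd A v α β v = α v + β v := by
    intro v α hα β hβ
    have h' := hex v α hα β hβ
    unfold nvAdd
    rw [dif_pos h']
    exact h'.choose_spec
  have huniq : ∀ (v : V), v ≠ 0 → ∀ α ∈ A, ∀ β ∈ A, ∀ γ ∈ A,
      γ v = α v + β v → γ = nvAdd A v α β := by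
    intro v hv α hα β hβ γ hγ hγv
    have hs := hspec v α hα β hβ
    exact (h.fpf γ hγ _ hs.1 v (by rw [hγv, hs.2])).resolve_right hv
  have hcomp' : ∀ α ∈ A, ∀ θ ∈ A, α ∘ θ ∈ A := by
    intro α hα θ hθ
    by_cases h1 : α = 0
    · subst h1
      have e : (0 : V → V) ∘ θ = 0 := rfl
      rw [e]; exact h.zero_mem
    by_cases h2 : θ = 0
    · subst h2
      have e : α ∘ (0 : V → V) = 0 := by
        funext x; exact hzero α hα
      rw [e]; exact h.zero_mem
    · exact h.comp_mem α hα θ hθ h1 h2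
  have hsub : ∀ γ ∈ A, ∀ x y : V, γ (x - y) = γ x - γ y := by
    intro γ hγ x y
    have e := h.endo γ hγ (x - y) y
    rw [sub_add_cancel] at e
    exact eq_sub_of_add_eq e.symm
  have hneg : ∀ γ ∈ A, ∀ x : V, γ (-x) = - γ x := by
    intro γ hγ x
    have e := h.endo γ hγ x (-x)
    rw [add_neg_cancel, hzero γ hγ] at e
    exact eq_neg_of_add_eq_zero_right e.symm
  intro v w hv hw α hα β hβ
  have hval : ∀ (x : V), x ≠ 0 → ∀ θ ∈ A,
      nvAdd A x α β (θ x) = α (θ x) + β (θ x) := by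
    intro x hx θ hθ
    have hc := congrFun (hdr x hx α hα β hβ θ hθ) x
    simp only [Function.comp_apply] at hc
    have hs2 := (hspec x (α ∘ θ) (hcomp' α hα θ hθ) (β ∘ θ) (hcomp' β hβ θ hθ)).2
    simp only [Function.comp_apply] at hs2
    rw [hc, hs2]
  obtain ⟨hDA, hDv⟩ := hspec v α hα β hβ
  obtain ⟨hFA, hFw⟩ := hspec w α hα β hβ
  by_cases hu0 : v + w = 0
  · -- here w = -v and the claim follows from additivity
    have hwv : w = -v := by
      have := neg_eq_of_add_eq_zero_right hu0
      exact this.symm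
    have hDw : nvAdd A v α β w = α w + β w := by
      rw [hwv, hneg _ hDA, hneg _ hα, hneg _ hβ, hDv]
      abel
    exact huniq w hw α hα β hβ _ hDA hDw
  · obtain ⟨hGA, hGu⟩ := hspec (v + w) α hα β hβ
    by_cases hGD : nvAdd A (v + w) α β = nvAdd A v α β
    · have h5 : nvAdd A v α β v + nvAdd A v α β w = (α v + β v) + (α w + β w) := by
        rw [← h.endo _ hDA v w, ← hGD, hGu, h.endo α hα v w, h.endo β hβ v w]
        abel
      rw [hDv] at h5
      exact huniq w hw α hα β hβ _ hDA (add_left_cancel h5)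
    by_cases hGF : nvAdd A (v + w) α β = nvAdd A w α β
    · have h5 : nvAdd A (v + w) α β v + nvAdd A (v + w) α β w
          = (α v + β v) + (α w + β w) := by
        rw [← h.endo _ hGA v w, hGu, h.endo α hα v w, h.endo β hβ v w]
        abel
      have h6 : nvAdd A (v + w) α β w = α w + β w := by rw [hGF]; exact hFw
      rw [h6] at h5
      have hGv : nvAdd A (v + w) α β v = α v + β v := add_right_cancel h5
      have hGD' := huniq v hv α hα β hβ _ hGA hGv
      rw [← hGD']
      exact hGF
    · -- the essential case: G ≠ D and G ≠ F
      have hstar : ∀ θ ∈ A,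
          nvAdd A (v + w) α β (θ v) + nvAdd A (v + w) α β (θ w)
            = nvAdd A v α β (θ v) + nvAdd A w α β (θ w) := by
        intro θ hθ
        have e0 : nvAdd A (v + w) α β (θ v) + nvAdd A (v + w) α β (θ w)
            = (α (θ v) + α (θ w)) + (β (θ v) + β (θ w)) := by
          rw [← h.endo _ hGA, ← h.endo α hα, ← h.endo β hβ, ← h.endo θ hθ]
          exact hval (v + w) hu0 θ hθ
        rw [hval v hv θ hθ, hval w hw θ hθ, e0]
        abel
      have h1 := hstar α hα
      have h2 := hstar β hβ
      have h3 := hstar _ hDA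
      have hii : nvAdd A (v + w) α β (nvAdd A v α β v)
            + nvAdd A (v + w) α β (nvAdd A w α β w)
          = nvAdd A v α β (nvAdd A v α β v)
            + nvAdd A w α β (nvAdd A w α β w) := by
        rw [hDv, hFw, h.endo _ hGA, h.endo _ hGA, h.endo _ hDA, h.endo _ hFA]
        calc nvAdd A (v+w) α β (α v) + nvAdd A (v+w) α β (β v)
              + (nvAdd A (v+w) α β (α w) + nvAdd A (v+w) α β (β w))
            = (nvAdd A (v+w) α β (α v) + nvAdd A (v+w) α β (α w))
              + (nvAdd A (v+w) α β (β v) + nvAdd A (v+w) α β (β w)) := by abel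
          _ = (nvAdd A v α β (α v) + nvAdd A w α β (α w))
              + (nvAdd A v α β (β v) + nvAdd A w α β (β w)) := by rw [h1, h2]
          _ = nvAdd A v α β (α v) + nvAdd A v α β (β v)
              + (nvAdd A w α β (α w) + nvAdd A w α β (β w)) := by abel
      have hkey := cancel_aux h3 hii
      have hGFsub : nvAdd A (v + w) α β (nvAdd A v α β w - nvAdd A w α β w)
          = nvAdd A w α β (nvAdd A v α β w - nvAdd A w α β w) := by
        rw [hsub _ hGA, hsub _ hFA, sub_eq_sub_iff_add_eq_add]
        exact hkey
      have hzero' := (h.fpf _ hGA _ hFA _ hGFsub).resolve_left hGF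
      have hDwFw : nvAdd A v α β w = nvAdd A w α β w := sub_eq_zero.mp hzero'
      exact (h.fpf _ hDA _ hFA w hDwFw).resolve_right hw
end

section
/- Let (V,A) be a near-vector space such that +_v = +_w (call it +') for all nonzero v, w ∈ Q(V). Then for every x ∈ V and α, β ∈ A, (α +' β)x = αx + βx; consequently Q(V) = V and V is a vector space (in the near-field sense) over (A, +', ·). -/
/-- If `+_v = +_w` for all nonzero `v, w ∈ Q(V)` (call the common addition `+'`),
then `(α +' β)x = αx + βx` for all `x ∈ V`; consequently `Q(V) = V` and `V` is a
vector space over `(A, +', ∘)`. -/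
theorem stmt12 {V : Type*} [AddCommGroup V] (A : Set (V → V)) (h : IsNVS A)
    (hagree : ∀ v ∈ Qset A, ∀ w ∈ Qset A, v ≠ 0 → w ≠ 0 →
      ∀ α ∈ A, ∀ β ∈ A, nvAdd A v α β = nvAdd A w α β) :
    (∀ u ∈ Qset A, u ≠ 0 → ∀ x : V, ∀ α ∈ A, ∀ β ∈ A,
      nvAdd A u α β x = α x + β x) ∧ Qset A = Set.univ := by
  -- basic facts about nvAdd on quasi-kernel elements
  have nv : ∀ v ∈ Qset A, ∀ α ∈ A, ∀ β ∈ A,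
      nvAdd A v α β ∈ A ∧ nvAdd A v α β v = α v + β v := by
    intro v hv α hα β hβ
    have hex : ∃ γ ∈ A, γ v = α v + β v := by
      obtain ⟨γ, hγ, hγeq⟩ := hv α hα β hβ
      exact ⟨γ, hγ, hγeq.symm⟩
    simp only [nvAdd, dif_pos hex]
    exact ⟨hex.choose_spec.1, hex.choose_spec.2⟩
  -- there is a nonzero quasi-kernel element
  have hQne : ∃ u ∈ Qset A, u ≠ 0 := by
    by_contra hc
    push_neg at hc
    obtain ⟨x, hx⟩ := h.nontriv
    have hle : AddSubgroup.closure (Qset A) ≤ ⊥ := by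
      rw [AddSubgroup.closure_le]
      intro y hy
      simpa [AddSubgroup.mem_bot] using hc y hy
    rw [h.gen] at hle
    exact hx (by simpa [AddSubgroup.mem_bot] using hle (AddSubgroup.mem_top x))
  -- zero is sent to zero by members of A
  have hz : ∀ α ∈ A, α (0 : V) = 0 := by
    intro α hα
    have := h.endo α hα 0 0
    simpa using this.symm
  -- the main pointwise statement
  have main : ∀ u ∈ Qset A, u ≠ 0 → ∀ α ∈ A, ∀ β ∈ A, ∀ x : V,
      nvAdd A u α β x = α x + β x := by
    intro u hu hu0 α hα β hβ
    set γ := nvAdd A u α β with hγdef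
    have hγA : γ ∈ A := (nv u hu α hα β hβ).1
    -- package as additive monoid homs
    let Γ : V →+ V := AddMonoidHom.mk' γ (fun a b => h.endo γ hγA a b)
    let Al : V →+ V := AddMonoidHom.mk' α (fun a b => h.endo α hα a b)
    let Be : V →+ V := AddMonoidHom.mk' β (fun a b => h.endo β hβ a b)
    let F : V →+ V := Γ - (Al + Be)
    have hker : AddSubgroup.closure (Qset A) ≤ F.ker := by
      rw [AddSubgroup.closure_le]
      intro w hw
      have hFw : γ w = α w + β w := by
        by_cases hw0 : w = 0
        · subst hw0
          rw [hz γ hγA, hz α hα, hz β hβ, add_zero]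
        · have := hagree u hu w hw hu0 hw0 α hα β hβ
          rw [hγdef, this]
          exact (nv w hw α hα β hβ).2
      have : F w = 0 := by
        simp only [F, AddMonoidHom.sub_apply, AddMonoidHom.add_apply, Γ, Al, Be,
          AddMonoidHom.mk'_apply]
        rw [hFw]; abel
      simpa [AddMonoidHom.mem_ker] using this
    rw [h.gen] at hker
    intro x
    have : F x = 0 := by
      simpa [AddMonoidHom.mem_ker] using hker (AddSubgroup.mem_top x)
    have hFx : γ x - (α x + β x) = 0 := by
      simpa [F, Γ, Al, Be, AddMonoidHom.sub_apply, AddMonoidHom.add_apply,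
        AddMonoidHom.mk'_apply] using this
    exact sub_eq_zero.mp hFx
  constructor
  · intro u hu hu0 x α hα β hβ
    exact main u hu hu0 α hα β hβ x
  · ext x
    simp only [Set.mem_univ, iff_true]
    intro α hα β hβ
    obtain ⟨u, hu, hu0⟩ := hQne
    exact ⟨nvAdd A u α β, (nv u hu α hα β hβ).1, (main u hu hu0 α hα β hβ x).symm⟩
end

section
/- Let (V,A) be a near-vector space in which (A, +_v, ·) is a division ring for every nonzero v ∈ Q(V). Define, for each nonzero u ∈ Q(V), the set V_u = {0} ∪ {v ∈ Q(V)\{0} : +_v = +_u}. Then each V_u is closed under addition and under scalar multiplication by A. -/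
/-- The "regular component" `V_u = {0} ∪ {v ∈ Q(V) \ {0} : +_v = +_u}`. -/
def Vcomp {V : Type*} [AddCommGroup V] (A : Set (V → V)) (u : V) : Set V :=
  insert 0 {v : V | v ∈ Qset A ∧ v ≠ 0 ∧
    ∀ α ∈ A, ∀ β ∈ A, nvAdd A v α β = nvAdd A u α β}

/-- If `(A, +_v, ∘)` is a division ring (right distributive) for every nonzero
`v ∈ Q(V)`, then each `V_u` is closed under addition and scalar multiplication. -/
theorem stmt14 {V : Type*} [AddCommGroup V] (A : Set (V → V)) (h : IsNVS A)
    (hdr : ∀ v ∈ Qset A, v ≠ 0 → ∀ α ∈ A, ∀ β ∈ A, ∀ θ ∈ A,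
      nvAdd A v α β ∘ θ = nvAdd A v (α ∘ θ) (β ∘ θ))
    (u : V) (huQ : u ∈ Qset A) (hu0 : u ≠ 0) :
    (∀ x ∈ Vcomp A u, ∀ y ∈ Vcomp A u, x + y ∈ Vcomp A u) ∧
    (∀ α ∈ A, ∀ x ∈ Vcomp A u, α x ∈ Vcomp A u) := by
  -- every α ∈ A kills 0
  have zmap : ∀ α ∈ A, α (0 : V) = 0 := by
    intro α hα
    have := h.endo α hα 0 0
    rw [add_zero] at this
    exact (left_eq_add.mp this).symm ▸ rfl
  -- specification of nvAdd on the quasi-kernel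
  have spec : ∀ v ∈ Qset A, ∀ f ∈ A, ∀ g ∈ A,
      nvAdd A v f g ∈ A ∧ (nvAdd A v f g) v = f v + g v := by
    intro v hv f hf g hg
    obtain ⟨γ, hγ, he⟩ := hv f hf g hg
    have hex : ∃ γ ∈ A, γ v = f v + g v := ⟨γ, hγ, he.symm⟩
    unfold nvAdd
    rw [dif_pos hex]
    exact ⟨hex.choose_spec.1, hex.choose_spec.2⟩
  -- uniqueness of nvAdd at a nonzero point
  have uniq : ∀ v : V, v ≠ 0 → ∀ f g γ : V → V, γ ∈ A → nvAdd A v f g ∈ A →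
      (nvAdd A v f g) v = f v + g v → γ v = f v + g v → nvAdd A v f g = γ := by
    intro v hv0 f g γ hγ hmem hval hγv
    rcases h.fpf _ hmem γ hγ v (by rw [hval, hγv]) with he | he
    · exact he
    · exact absurd he hv0
  constructor
  · -- closure under addition
    intro x hx y hy
    rcases Set.mem_insert_iff.mp hx with rfl | ⟨hxQ, hx0, hxadd⟩
    · rwa [zero_add]
    rcases Set.mem_insert_iff.mp hy with rfl | ⟨hyQ, hy0, hyadd⟩
    · rwa [add_zero]
    by_cases hxy : x + y = 0
    · rw [hxy]; exact Set.mem_insert _ _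
    -- key computation: (α +_u β)(x+y) = α(x+y) + β(x+y)
    have key : ∀ α ∈ A, ∀ β ∈ A,
        (nvAdd A u α β) (x + y) = α (x + y) + β (x + y) := by
      intro α hα β hβ
      have hγA : nvAdd A u α β ∈ A := (spec u huQ α hα β hβ).1
      have hγx : (nvAdd A u α β) x = α x + β x := by
        rw [← hxadd α hα β hβ]; exact (spec x hxQ α hα β hβ).2
      have hγy : (nvAdd A u α β) y = α y + β y := by
        rw [← hyadd α hα β hβ]; exact (spec y hyQ α hα β hβ).2
      rw [h.endo _ hγA, h.endo α hα, h.endo β hβ, hγx, hγy]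
      abel
    have hQ : x + y ∈ Qset A := by
      intro α hα β hβ
      exact ⟨nvAdd A u α β, (spec u huQ α hα β hβ).1, (key α hα β hβ).symm⟩
    refine Set.mem_insert_iff.mpr (Or.inr ⟨hQ, hxy, ?_⟩)
    intro α hα β hβ
    exact uniq (x + y) hxy α β (nvAdd A u α β) (spec u huQ α hα β hβ).1
      (spec (x + y) hQ α hα β hβ).1 (spec (x + y) hQ α hα β hβ).2 (key α hα β hβ)
  · -- closure under scalar multiplication
    intro α hα x hx
    rcases Set.mem_insert_iff.mp hx with rfl | ⟨hxQ, hx0, hxadd⟩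
    · rw [zmap α hα]; exact Set.mem_insert _ _
    by_cases hα0 : α = 0
    · subst hα0; exact Set.mem_insert _ _
    have hαx : α x ≠ 0 := by
      intro hc
      have : α x = α 0 := by rw [hc, zmap α hα]
      exact hx0 ((h.bij α hα hα0).injective this)
    -- composites lie in A
    have compA : ∀ β ∈ A, β ∘ α ∈ A := by
      intro β hβ
      by_cases hβ0 : β = 0
      · subst hβ0
        have : (0 : V → V) ∘ α = 0 := rfl
        rw [this]; exact h.zero_mem
      · exact h.comp_mem β hβ α hα hβ0 hα0
    -- key computation: (β +_x γ)(α x) = β (α x) + γ (α x)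
    have key : ∀ β ∈ A, ∀ γ ∈ A,
        (nvAdd A x β γ) (α x) = β (α x) + γ (α x) := by
      intro β hβ γ hγ
      have hd := hdr x hxQ hx0 β hβ γ hγ α hα
      have := congrFun hd x
      simp only [Function.comp_apply] at this
      rw [this]
      exact (spec x hxQ (β ∘ α) (compA β hβ) (γ ∘ α) (compA γ hγ)).2
    have hQ : α x ∈ Qset A := by
      intro β hβ γ hγ
      exact ⟨nvAdd A x β γ, (spec x hxQ β hβ γ hγ).1, (key β hβ γ hγ).symm⟩
    refine Set.mem_insert_iff.mpr (Or.inr ⟨hQ, hαx, ?_⟩)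
    intro β hβ γ hγ
    have h1 : nvAdd A (α x) β γ = nvAdd A x β γ :=
      uniq (α x) hαx β γ (nvAdd A x β γ) (spec x hxQ β hβ γ hγ).1
        (spec (α x) hQ β hβ γ hγ).1 (spec (α x) hQ β hβ γ hγ).2 (key β hβ γ hγ)
    rw [h1, hxadd β hβ γ hγ]
end

section
/- Consider V = ℝ³ with scalar multiplication α(x,y,z) = (α³x, α⁵y, α³z) for α ∈ ℝ. Then the set V₁ = {(a,0,c) : a,c ∈ ℝ} and V₂ = {(0,b,0) : b ∈ ℝ} satisfy: V₁ ∪ V₂ = Q(V) (the quasi-kernel), every element of V₁ (resp. V₂) is in the quasi-kernel with induced addition α +_v β = (α³+β³)^{1/3} (resp. (α⁵+β⁵)^{1/5}), and ℝ³ = V₁ ⊕ V₂ as additive groups. -/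
/-- The real cube root. -/
noncomputable def root3 (x : ℝ) : ℝ := Real.sign x * |x| ^ ((1 : ℝ) / 3)

/-- The real fifth root. -/
noncomputable def root5 (x : ℝ) : ℝ := Real.sign x * |x| ^ ((1 : ℝ) / 5)

/-- Scalar multiplication on `ℝ³`: `α(x,y,z) = (α³x, α⁵y, α³z)`. -/
def sm17 (α : ℝ) (v : ℝ × ℝ × ℝ) : ℝ × ℝ × ℝ :=
  (α ^ 3 * v.1, α ^ 5 * v.2.1, α ^ 3 * v.2.2)

/-- `V₁ = {(a,0,c)}`. -/
def V1 : Set (ℝ × ℝ × ℝ) := {v | v.2.1 = 0}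

/-- `V₂ = {(0,b,0)}`. -/
def V2 : Set (ℝ × ℝ × ℝ) := {v | v.1 = 0 ∧ v.2.2 = 0}

lemma sign_mul_abs' (x : ℝ) : Real.sign x * |x| = x := by
  rcases lt_trichotomy x 0 with h|h|h
  · rw [Real.sign_of_neg h, abs_of_neg h]; ring
  · simp [h]
  · rw [Real.sign_of_pos h, abs_of_pos h]; ring

lemma sign_pow_odd (x : ℝ) (n : ℕ) (hn : Odd n) : Real.sign x ^ n = Real.sign x := by
  rcases lt_trichotomy x 0 with h|h|h
  · simp [Real.sign_of_neg h, hn.neg_one_pow]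
  · have : n ≠ 0 := by rintro rfl; simp at hn
    simp [h, Real.sign_zero, zero_pow this]
  · simp [Real.sign_of_pos h]

lemma root3_pow (x : ℝ) : root3 x ^ 3 = x := by
  unfold root3
  rw [mul_pow, sign_pow_odd x 3 (by decide),
    ← Real.rpow_natCast (|x| ^ ((1:ℝ)/3)) 3, ← Real.rpow_mul (abs_nonneg x)]
  norm_num [sign_mul_abs']

lemma root5_pow (x : ℝ) : root5 x ^ 5 = x := by
  unfold root5
  rw [mul_pow, sign_pow_odd x 5 (by decide),
    ← Real.rpow_natCast (|x| ^ ((1:ℝ)/5)) 5, ← Real.rpow_mul (abs_nonneg x)]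
  norm_num [sign_mul_abs']

/-- For `ℝ³` with `α(x,y,z) = (α³x, α⁵y, α³z)`: the quasi-kernel is `V₁ ∪ V₂`;
the induced addition on `V₁` (resp. `V₂`) is `α +_v β = (α³+β³)^{1/3}`
(resp. `(α⁵+β⁵)^{1/5}`); and `ℝ³ = V₁ ⊕ V₂` as additive groups. -/
theorem stmt17 :
    ({v : ℝ × ℝ × ℝ | ∀ α β : ℝ, ∃ γ : ℝ, sm17 α v + sm17 β v = sm17 γ v}
        = V1 ∪ V2) ∧
    (∀ v ∈ V1, v ≠ 0 → ∀ α β : ℝ,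
        sm17 α v + sm17 β v = sm17 (root3 (α ^ 3 + β ^ 3)) v) ∧
    (∀ v ∈ V2, v ≠ 0 → ∀ α β : ℝ,
        sm17 α v + sm17 β v = sm17 (root5 (α ^ 5 + β ^ 5)) v) ∧
    (∀ v : ℝ × ℝ × ℝ, ∃ a ∈ V1, ∃ b ∈ V2, v = a + b) ∧
    (∀ v ∈ V1, v ∈ V2 → v = 0) := by
  have key1 : ∀ (v : ℝ × ℝ × ℝ), v.2.1 = 0 → ∀ α β : ℝ,
      sm17 α v + sm17 β v = sm17 (root3 (α ^ 3 + β ^ 3)) v := by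
    intro v h α β
    simp only [sm17, Prod.mk_add_mk, Prod.mk.injEq, root3_pow, h, mul_zero, add_zero]
    exact ⟨by ring, trivial, by ring⟩
  have key2 : ∀ (v : ℝ × ℝ × ℝ), v.1 = 0 → v.2.2 = 0 → ∀ α β : ℝ,
      sm17 α v + sm17 β v = sm17 (root5 (α ^ 5 + β ^ 5)) v := by
    intro v h1 h2 α β
    simp only [sm17, Prod.mk_add_mk, Prod.mk.injEq, root5_pow, h1, h2, mul_zero, add_zero]
    exact ⟨trivial, by ring, trivial⟩
  refine ⟨?_, fun v hv _ => key1 v hv, fun v hv _ => key2 v hv.1 hv.2, ?_, ?_⟩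
  · ext v
    simp only [Set.mem_setOf_eq, Set.mem_union, V1, V2, Set.mem_setOf_eq]
    constructor
    · intro h
      by_contra hc
      push_neg at hc
      obtain ⟨h1, h2⟩ := hc
      obtain ⟨γ, hγ⟩ := h 1 1
      simp only [sm17, Prod.mk_add_mk, Prod.mk.injEq, one_pow, one_mul] at hγ
      obtain ⟨e1, e2, e3⟩ := hγ
      have h5 : γ ^ 5 = 2 := by
        have := mul_right_cancel₀ h1 (by linarith [e2] : γ ^ 5 * v.2.1 = 2 * v.2.1)
        linarith
      have h3' : γ ^ 3 = 2 := by
        by_cases hx : v.1 = 0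
        · have h3 := h2 hx
          have := mul_right_cancel₀ h3 (by linarith [e3] : γ ^ 3 * v.2.2 = 2 * v.2.2)
          linarith
        · have := mul_right_cancel₀ hx (by linarith [e1] : γ ^ 3 * v.1 = 2 * v.1)
          linarith
      nlinarith [sq_nonneg γ, sq_nonneg (γ - 1), sq_nonneg (γ + 1), sq_nonneg (γ^2 - 1)]
    · rintro (h | ⟨h1, h2⟩) α β
      · exact ⟨root3 (α ^ 3 + β ^ 3), key1 v h α β⟩
      · exact ⟨root5 (α ^ 5 + β ^ 5), key2 v h1 h2 α β⟩
  · intro v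
    exact ⟨(v.1, 0, v.2.2), rfl, (0, v.2.1, 0), ⟨rfl, rfl⟩, by simp⟩
  · intro v h1 h2
    obtain ⟨a, b⟩ := h2
    exact Prod.ext a (Prod.ext h1 b)
end

section
/- Let (V,A) be a near-vector space in which (A, +_v, ·) is a division ring for all nonzero v ∈ Q(V), and suppose there exist linearly independent u, w ∈ Q(V) with +_u ≠ +_w. Then there exist distinct vectors x, y ∈ V \ Q(V) with L(x) = L(y), where L(z) denotes the set of all finite sums of scalar multiples of z. (Take x = u + w and y = θu + w for θ ∈ A \ {0, id}.) -/
/-- `L(z)`: the set of all finite sums of scalar multiples of `z`. -/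
def Lset {V : Type*} [AddCommGroup V] (A : Set (V → V)) (z : V) : Set V :=
  {p | ∃ (n : ℕ) (α : Fin n → V → V), (∀ i, α i ∈ A) ∧ p = ∑ i, α i z}

/-- If `(A, +_v, ∘)` is a division ring for every nonzero `v ∈ Q(V)`, and there are
linearly independent `u, w ∈ Q(V)` with `+_u ≠ +_w` (and `A` has a scalar
`θ ∉ {0, id}`), then there are distinct `x, y ∉ Q(V)` with `L(x) = L(y)`. -/
theorem stmt19 {V : Type*} [AddCommGroup V] (A : Set (V → V)) (h : IsNVS A)
    (hdr : ∀ v ∈ Qset A, v ≠ 0 → ∀ α ∈ A, ∀ β ∈ A, ∀ θ ∈ A,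
      nvAdd A v α β ∘ θ = nvAdd A v (α ∘ θ) (β ∘ θ))
    (u w : V) (huQ : u ∈ Qset A) (hwQ : w ∈ Qset A)
    (hindep : ∀ α ∈ A, ∀ β ∈ A, α u + β w = 0 → α = 0 ∧ β = 0)
    (hne : ∃ α ∈ A, ∃ β ∈ A, nvAdd A u α β ≠ nvAdd A w α β)
    (hθ : ∃ θ ∈ A, θ ≠ 0 ∧ θ ≠ (id : V → V)) :
    ∃ x y : V, x ≠ y ∧ x ∉ Qset A ∧ y ∉ Qset A ∧ Lset A x = Lset A y := by
  classical
  obtain ⟨θ, hθA, hθ0, hθid⟩ := hθ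
  obtain ⟨x0, hx0⟩ := h.nontriv
  have hneg0 : (fun x : V => -x) ≠ (0 : V → V) := by
    intro hc
    have := congrFun hc x0
    simp only [Pi.zero_apply, neg_eq_zero] at this
    exact hx0 this
  have hid0 : (id : V → V) ≠ 0 := by
    intro hc
    have := congrFun hc x0
    simp only [id_eq, Pi.zero_apply] at this
    exact hx0 this
  -- subtraction inside the quasi-kernel
  have hsub : ∀ v ∈ Qset A, ∀ γ ∈ A, ∀ δ ∈ A, ∃ σ ∈ A, σ v = γ v - δ v := by
    intro v hv γ hγ δ hδ
    by_cases hδ0 : δ = 0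
    · exact ⟨γ, hγ, by simp [hδ0]⟩
    · have hnδ : (fun x : V => -x) ∘ δ ∈ A := h.comp_mem _ h.neg_mem _ hδ hneg0 hδ0
      obtain ⟨σ, hσA, hσ⟩ := hv γ hγ _ hnδ
      refine ⟨σ, hσA, ?_⟩
      rw [sub_eq_add_neg]
      exact hσ.symm
  have hu0 : u ≠ 0 := by
    intro hc
    exact hid0 (hindep id h.id_mem 0 h.zero_mem (by simp [hc])).1
  -- x = u + w
  set x := u + w with hxdef
  have hxne : x ≠ 0 := by
    intro hc
    exact hid0 (hindep id h.id_mem id h.id_mem (by simpa using hc)).1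
  -- the chosen nvAdd value is the unique one
  have key : ∀ v : V, v ≠ 0 → v ∈ Qset A → ∀ α β δ : V → V, δ ∈ A →
      δ v = α v + β v → nvAdd A v α β = δ := by
    intro v hv hvQ α β δ hδA hδ
    have hex : ∃ γ ∈ A, γ v = α v + β v := ⟨δ, hδA, hδ⟩
    rw [nvAdd, dif_pos hex]
    obtain ⟨hcA, hceq⟩ := hex.choose_spec
    have := h.fpf _ hcA _ hδA v (by rw [hceq, hδ])
    exact this.resolve_right hv
  have hw0 : w ≠ 0 := by
    intro hc
    exact hid0 (hindep 0 h.zero_mem id h.id_mem (by simp [hc])).2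
  -- x ∉ Q
  have hxQ : x ∉ Qset A := by
    intro hQ
    obtain ⟨α, hαA, β, hβA, hne'⟩ := hne
    obtain ⟨γ, hγA, hγeq⟩ := hQ α hαA β hβA
    obtain ⟨δu, hδuA, hδu⟩ := huQ α hαA β hβA
    obtain ⟨δw, hδwA, hδw⟩ := hwQ α hαA β hβA
    have e1 : (α u + α w) + (β u + β w) = γ u + γ w := by
      rw [← h.endo α hαA, ← h.endo β hβA, ← h.endo γ hγA]
      exact hγeq
    have e2 : γ u + γ w = (α u + β u) + (α w + β w) := by rw [← e1]; abel
    obtain ⟨σ, hσA, hσ⟩ := hsub u huQ γ hγA δu hδuA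
    obtain ⟨τ, hτA, hτ⟩ := hsub w hwQ γ hγA δw hδwA
    have hzero : σ u + τ w = 0 := by
      rw [hσ, hτ, ← hδu, ← hδw, sub_add_sub_comm, e2, sub_self]
    obtain ⟨hσ0, hτ0⟩ := hindep σ hσA τ hτA hzero
    have hγu : γ u = α u + β u := by
      have : σ u = 0 := by rw [hσ0]; simp
      rw [this] at hσ
      have h1 := sub_eq_zero.mp hσ.symm
      rw [h1]; exact hδu.symm
    have hγw : γ w = α w + β w := by
      have : τ w = 0 := by rw [hτ0]; simp
      rw [this] at hτ
      have h1 := sub_eq_zero.mp hτ.symm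
      rw [h1]; exact hδw.symm
    have k1 := key u hu0 huQ α β γ hγA hγu
    have k2 := key w hw0 hwQ α β γ hγA hγw
    exact hne' (k1.trans k2.symm)
  -- inverse of θ
  obtain ⟨θi, hθiA, hθi0, hθθi, hθiθ⟩ := h.inv_mem θ hθA hθ0
  -- Q pulls back
  have hQlem : ∀ z : V, θ z ∈ Qset A → z ∈ Qset A := by
    intro z hz α hαA β hβA
    by_cases hα : α = 0
    · exact ⟨β, hβA, by rw [hα]; simp⟩
    by_cases hβ : β = 0
    · exact ⟨α, hαA, by rw [hβ]; simp⟩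
    obtain ⟨γ, hγA, hγ⟩ := hz (α ∘ θi) (h.comp_mem _ hαA _ hθiA hα hθi0)
      (β ∘ θi) (h.comp_mem _ hβA _ hθiA hβ hθi0)
    have hz' : θi (θ z) = z := congrFun hθiθ z
    by_cases hγ0 : γ = 0
    · refine ⟨0, h.zero_mem, ?_⟩
      rw [hγ0] at hγ
      simp only [Function.comp_apply, hz', Pi.zero_apply] at hγ
      simpa using hγ
    · refine ⟨γ ∘ θ, h.comp_mem _ hγA _ hθA hγ0 hθ0, ?_⟩
      simp only [Function.comp_apply, hz'] at hγ
      exact hγ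
  -- L(φ z) ⊆ L(z) for nonzero φ ∈ A
  have hL : ∀ (z : V) (φ : V → V), φ ∈ A → φ ≠ 0 → Lset A (φ z) ⊆ Lset A z := by
    rintro z φ hφA hφ0 p ⟨n, α, hα, hp⟩
    refine ⟨n, fun i => α i ∘ φ, ?_, ?_⟩
    · intro i
      show α i ∘ φ ∈ A
      by_cases hi : α i = 0
      · rw [hi]
        have : ((0 : V → V) ∘ φ) = 0 := rfl
        rw [this]; exact h.zero_mem
      · exact h.comp_mem _ (hα i) _ hφA hi hφ0
    · rw [hp]; rfl
  refine ⟨x, θ x, ?_, hxQ, ?_, ?_⟩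
  · intro hc
    have := h.fpf θ hθA id h.id_mem x hc.symm
    rcases this with h1 | h2
    · exact hθid h1
    · exact hxne h2
  · intro hyQ
    exact hxQ (hQlem x hyQ)
  · apply Set.Subset.antisymm
    · have hx' : x = θi (θ x) := (congrFun hθiθ x).symm
      intro p hp
      rw [hx'] at hp
      exact hL (θ x) θi hθiA hθi0 hp
    · exact hL x θ hθA hθ0
end
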